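/- Let A ∈ M_{p,q}(ℂ) with ‖A‖ < 1. Then the map H_A(Z) = (I_p - AA*)^{-1/2}(Z + A)(I_q + A*Z)⁻¹(I_q - A*A)^{1/2} maps {Z ∈ M_{p,q}(ℂ) : ‖Z‖ < 1} into itself. -/

import Mathlib

/-
Put `W = H_A(Z)`, `B = I + A*Z` and `M = B⁻¹(I - A*A)^{1/2}`. The push-through identity
`(I - AA*)⁻¹ = I + A(I - A*A)⁻¹A*` turns `(Z + A)*(I - AA*)⁻¹(Z + A)` into
`B*(I - A*A)⁻¹B - (I - Z*Z)`, whence `I - W*W = M*(I - Z*Z)M`. As `M` is invertible, `I - W*W`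
is strictly positive because `I - Z*Z` is. Finally, `‖W‖ < 1` iff `I - W*W` is strictly positive:
the spectrum of `W*W ≥ 0` lies in `[0, ‖W‖²]` and contains `‖W‖²`.
-/

open scoped Matrix.Norms.L2Operator ComplexOrder
open Matrix

/-- The positive semidefinite square root of a positive semidefinite matrix
(the definition `Matrix.PosSemidef.sqrt` of the older Mathlib, since removed). -/
noncomputable def Matrix.PosSemidef.sqrt {n 𝕜 : Type*} [Fintype n] [DecidableEq n] [RCLike 𝕜]
    {A : Matrix n n 𝕜} (hA : A.PosSemidef) : Matrix n n 𝕜 :=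
  hA.1.eigenvectorUnitary.1 * diagonal ((↑) ∘ (√·) ∘ hA.1.eigenvalues) *
  (star hA.1.eigenvectorUnitary : Matrix n n 𝕜)

/-- The nc-ball automorphism `H_A(Z) = (I-AA*)^{-1/2}(Z+A)(I+A*Z)⁻¹(I-A*A)^{1/2}`,
written using the positive semidefinite square roots of `I - AA*` and `I - A*A`. -/
noncomputable def ballMobius {p q : ℕ} (A : Matrix (Fin p) (Fin q) ℂ)
    (hP : (1 - A * Aᴴ).PosSemidef) (hQ : (1 - Aᴴ * A).PosSemidef)
    (Z : Matrix (Fin p) (Fin q) ℂ) : Matrix (Fin p) (Fin q) ℂ :=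
  hP.sqrt⁻¹ * (Z + A) * (1 + Aᴴ * Z)⁻¹ * hQ.sqrt

open scoped MatrixOrder

section

variable {n 𝕜 : Type*} [Fintype n] [DecidableEq n] [RCLike 𝕜] {A : Matrix n n 𝕜}

lemma Matrix.PosSemidef.sqrt_mul_sqrt (hA : A.PosSemidef) : hA.sqrt * hA.sqrt = A := by
  conv_rhs => rw [hA.1.spectral_theorem, Unitary.conjStarAlgAut_apply]
  rw [sqrt, Matrix.mul_assoc, Matrix.mul_assoc, ← Matrix.mul_assoc (star _ : Matrix n n 𝕜),
    ← Matrix.mul_assoc (star _ : Matrix n n 𝕜), Unitary.coe_star_mul_self, Matrix.one_mul,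
    ← Matrix.mul_assoc (diagonal _), diagonal_mul_diagonal, ← Matrix.mul_assoc]
  congr 3
  funext i
  simp [← RCLike.ofReal_mul, Real.mul_self_sqrt (hA.eigenvalues_nonneg i)]

lemma Matrix.PosSemidef.conjTranspose_sqrt (hA : A.PosSemidef) : hA.sqrtᴴ = hA.sqrt := by
  have hD : star (RCLike.ofReal ∘ (√·) ∘ hA.1.eigenvalues : n → 𝕜) =
      RCLike.ofReal ∘ (√·) ∘ hA.1.eigenvalues := by
    funext i
    simp [RCLike.star_def]
  simp [sqrt, diagonal_conjTranspose, Matrix.mul_assoc, star_eq_conjTranspose, hD]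

lemma Matrix.PosSemidef.isUnit_sqrt (hA : A.PosSemidef) (h : IsUnit A) : IsUnit hA.sqrt :=
  isUnit_of_mul_isUnit_left (y := hA.sqrt) (hA.sqrt_mul_sqrt.symm ▸ h)

end

section

variable {m n 𝕜 : Type*} [Fintype m] [Fintype n] [DecidableEq m] [DecidableEq n] [CommRing 𝕜]

lemma Matrix.inv_one_sub_mul {A : Matrix m n 𝕜} {B : Matrix n m 𝕜} (h : IsUnit (1 - B * A)) :
    (1 - A * B)⁻¹ = 1 + A * (1 - B * A)⁻¹ * B := by
  simpa [← sub_eq_add_neg] using add_mul_mul_inv_eq_sub' 1 A 1 (-B) isUnit_one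
    (by simpa [← sub_eq_add_neg] using h)

lemma Matrix.mul_inv_mul_self_mul {S : Matrix n n 𝕜} (hS : IsUnit S) : S * (S * S)⁻¹ * S = 1 := by
  have hSdet := (isUnit_iff_isUnit_det _).1 hS
  rw [Matrix.mul_inv_rev, Matrix.mul_assoc, Matrix.mul_assoc, nonsing_inv_mul _ hSdet,
    Matrix.mul_one, mul_nonsing_inv _ hSdet]

variable [StarRing 𝕜]

lemma Matrix.conjTranspose_add_mul_inv_mul_add {A Z : Matrix m n 𝕜}
    (hA : IsUnit (1 - Aᴴ * A)) :
    (Z + A)ᴴ * (1 - A * Aᴴ)⁻¹ * (Z + A)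
      = (1 + Aᴴ * Z)ᴴ * (1 - Aᴴ * A)⁻¹ * (1 + Aᴴ * Z) - (1 - Zᴴ * Z) := by
  rw [inv_one_sub_mul hA]
  have hQ : (1 - Aᴴ * A)ᴴ = 1 - Aᴴ * A :=
    (isHermitian_one.sub (isHermitian_conjTranspose_mul_self A)).eq
  have hQinv := (isUnit_iff_isUnit_det _).1 hA
  set B := 1 + Aᴴ * Z
  set Q := 1 - Aᴴ * A
  have hAB : Aᴴ * (Z + A) = B - Q := by
    simp only [B, Q, Matrix.mul_add]; abel
  have hBA : (Z + A)ᴴ * A = Bᴴ - Q := by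
    simpa [hQ] using congrArg conjTranspose hAB
  calc (Z + A)ᴴ * (1 + A * Q⁻¹ * Aᴴ) * (Z + A)
      = (Z + A)ᴴ * (Z + A) + (Z + A)ᴴ * A * Q⁻¹ * (Aᴴ * (Z + A)) := by
        simp only [Matrix.mul_add, Matrix.add_mul, Matrix.mul_one, Matrix.mul_assoc]
        abel
    _ = (Z + A)ᴴ * (Z + A) + (Bᴴ * Q⁻¹ * B - Bᴴ * (Q⁻¹ * Q) - Q * Q⁻¹ * B + Q * Q⁻¹ * Q) := by
        rw [hAB, hBA]
        simp only [Matrix.mul_sub, Matrix.sub_mul, Matrix.mul_assoc]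
        abel
    _ = Bᴴ * Q⁻¹ * B - (1 - Zᴴ * Z) := by
        rw [nonsing_inv_mul _ hQinv, mul_nonsing_inv _ hQinv]
        simp only [B, Q, conjTranspose_add, conjTranspose_mul, conjTranspose_one, Matrix.add_mul,
          Matrix.mul_add, Matrix.mul_one, Matrix.one_mul, conjTranspose_conjTranspose]
        abel

lemma Matrix.one_sub_conjTranspose_mul_self_mobius {A Z : Matrix m n 𝕜} {T : Matrix m m 𝕜}
    {S : Matrix n n 𝕜} (hT : Tᴴ = T) (hS : Sᴴ = S) (hTT : T * T = 1 - A * Aᴴ)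
    (hSS : S * S = 1 - Aᴴ * A) (hSunit : IsUnit S) (hB : IsUnit (1 + Aᴴ * Z)) :
    1 - (T⁻¹ * (Z + A) * (1 + Aᴴ * Z)⁻¹ * S)ᴴ * (T⁻¹ * (Z + A) * (1 + Aᴴ * Z)⁻¹ * S)
      = ((1 + Aᴴ * Z)⁻¹ * S)ᴴ * (1 - Zᴴ * Z) * ((1 + Aᴴ * Z)⁻¹ * S) := by
  rw [Matrix.mul_assoc _ (1 + Aᴴ * Z)⁻¹]
  set M := (1 + Aᴴ * Z)⁻¹ * S
  have hBM : (1 + Aᴴ * Z) * M = S := by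
    rw [← Matrix.mul_assoc, mul_nonsing_inv _ ((isUnit_iff_isUnit_det _).1 hB), Matrix.one_mul]
  calc 1 - (T⁻¹ * (Z + A) * M)ᴴ * (T⁻¹ * (Z + A) * M)
      = 1 - Mᴴ * ((Z + A)ᴴ * (1 - A * Aᴴ)⁻¹ * (Z + A)) * M := by
        rw [← hTT, Matrix.mul_inv_rev]
        simp only [conjTranspose_mul, conjTranspose_nonsing_inv, hT, Matrix.mul_assoc]
    _ = 1 - (((1 + Aᴴ * Z) * M)ᴴ * (1 - Aᴴ * A)⁻¹ * ((1 + Aᴴ * Z) * M)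
          - Mᴴ * (1 - Zᴴ * Z) * M) := by
        rw [conjTranspose_add_mul_inv_mul_add (hSS ▸ hSunit.mul hSunit)]
        simp only [conjTranspose_mul, Matrix.mul_sub, Matrix.sub_mul, Matrix.mul_assoc]
    _ = Mᴴ * (1 - Zᴴ * Z) * M := by
        rw [hBM, hS, ← hSS, mul_inv_mul_self_mul hSunit, sub_sub_cancel]

end

lemma CStarAlgebra.norm_lt_one_iff_isStrictlyPositive_one_sub {A : Type*} [CStarAlgebra A]
    [PartialOrder A] [StarOrderedRing A] {a : A} (ha : 0 ≤ a) :
    ‖a‖ < 1 ↔ IsStrictlyPositive (1 - a) := by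
  nontriviality A
  rw [StarOrderedRing.isStrictlyPositive_iff_spectrum_pos (R := ℝ) (1 - a),
    ← map_one (algebraMap ℝ A), ← spectrum.singleton_sub_eq]
  simp only [Set.singleton_sub, Set.forall_mem_image, sub_pos]
  refine ⟨fun h y hy => ?_, fun h => h (CStarAlgebra.norm_mem_spectrum_of_nonneg ha)⟩
  exact ((Real.le_norm_self y).trans (spectrum.norm_le_norm_of_mem hy)).trans_lt h

lemma Matrix.l2_opNorm_lt_one_iff {m n : Type*} [Fintype m] [Fintype n] [DecidableEq n]
    (W : Matrix m n ℂ) : ‖W‖ < 1 ↔ IsStrictlyPositive (1 - Wᴴ * W) := by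
  rw [← CStarAlgebra.norm_lt_one_iff_isStrictlyPositive_one_sub
    (nonneg_iff_posSemidef.mpr (posSemidef_conjTranspose_mul_self W)),
    l2_opNorm_conjTranspose_mul_self, ← sq, sq_lt_one_iff₀ (norm_nonneg W)]

lemma Matrix.isUnit_one_add_conjTranspose_mul {m n 𝕜 : Type*} [Fintype m] [Fintype n]
    [DecidableEq m] [DecidableEq n] [RCLike 𝕜] {A Z : Matrix m n 𝕜} (hA : ‖A‖ < 1)
    (hZ : ‖Z‖ < 1) :
    IsUnit (1 + Aᴴ * Z) := by
  have hAZ : ‖-(Aᴴ * Z)‖ < 1 := by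
    rw [norm_neg]
    calc ‖Aᴴ * Z‖ ≤ ‖Aᴴ‖ * ‖Z‖ := l2_opNorm_mul _ _
      _ < 1 := by
        rw [l2_opNorm_conjTranspose]
        exact mul_lt_one_of_nonneg_of_lt_one_left (norm_nonneg _) hA hZ.le
  simpa using isUnit_one_sub_of_norm_lt_one hAZ

/-- `H_A` maps the open matrix unit ball into itself. -/
theorem ballMobius_maps_ball {p q : ℕ} (A : Matrix (Fin p) (Fin q) ℂ) (hA : ‖A‖ < 1)
    (hP : (1 - A * Aᴴ).PosSemidef) (hQ : (1 - Aᴴ * A).PosSemidef)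
    (Z : Matrix (Fin p) (Fin q) ℂ) (hZ : ‖Z‖ < 1) :
    ‖ballMobius A hP hQ Z‖ < 1 := by
  have hSunit := hQ.isUnit_sqrt ((l2_opNorm_lt_one_iff A).1 hA).isUnit
  have hB := isUnit_one_add_conjTranspose_mul hA hZ
  rw [l2_opNorm_lt_one_iff, ballMobius,
    one_sub_conjTranspose_mul_self_mobius hP.conjTranspose_sqrt hQ.conjTranspose_sqrt
      hP.sqrt_mul_sqrt hQ.sqrt_mul_sqrt hSunit hB,
    ← star_eq_conjTranspose,
    ((isUnit_nonsing_inv_iff.2 hB).mul hSunit).isStrictlyPositive_star_left_conjugate_iff]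
  exact (l2_opNorm_lt_one_iff Z).1 hZ
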